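/- There exists a separable Hausdorff space X such that the tightness of its G_δ-modification is greater than 2^{ℵ₀}. Witness: let Y = ω ∪ {nonprincipal ultrafilters on ω} be the Katětov extension of ω (points of ω isolated; a basic neighborhood of a nonprincipal ultrafilter p is {p} ∪ A with A ∈ p, modulo removing finite sets), and let X = Y ∪ {∞} where neighborhoods of ∞ are the sets V ∋ ∞ with |X \ V| ≤ 2^{ℵ₀}. -/

import Mathlib

/-!
The nodes of the binary tree `List Bool` play the role of `ω`; its `𝔠` branches are infinite and
pairwise almost disjoint. The space consists of the nodes (isolated), the free ultrafilters on the
nodes that contain a branch (with Katětov's neighbourhoods `{q} ∪ A`, `A ∈ q`), and a point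
`infty` whose neighbourhoods omit at most `𝔠` points outside the cones of finitely many branches,
the cone of `A` being `A` together with the ultrafilters containing `A`. Cones of subsets of a
branch are clopen, so the space is totally separated; the nodes are dense.

A G_δ-neighbourhood of `infty` omits at most `𝔠` points outside the cones of countably many
branches. A branch not among them lies in `2 ^ 𝔠` free ultrafilters (Hausdorff's independent
family), which avoid those cones by almost disjointness, so the neighbourhood contains an
ultrafilter point. Hence `infty` is in the G_δ-closure of the ultrafilter points, while any `𝔠` of
them form a closed set missing `infty`: the tightness of the G_δ-modification exceeds `𝔠`.
-/

open Cardinal Set Topology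

universe u

/-- A free sequence of length `o` in the topology `t`: a transfinite sequence indexed by
the ordinals below `o` such that every initial segment's closure is disjoint from the
closure of the corresponding final segment. -/
def IsFreeSeqOn {X : Type u} (t : TopologicalSpace X) (o : Ordinal.{u})
    (x : {α : Ordinal.{u} // α < o} → X) : Prop :=
  ∀ i : {α : Ordinal.{u} // α < o},
    @closure X t (x '' {j | j < i}) ∩ @closure X t (x '' {j | i ≤ j}) = ∅

/-- The tightness of a topology: the least infinite cardinal `κ` such that whenever a
point is in the closure of a set `A`, it is in the closure of a subset of `A` of
cardinality at most `κ`. -/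
noncomputable def tightnessOf {X : Type u} (t : TopologicalSpace X) : Cardinal.{u} :=
  sInf {κ : Cardinal.{u} | ℵ₀ ≤ κ ∧ ∀ (A : Set X) (p : X), p ∈ @closure X t A →
    ∃ B ⊆ A, #↥B ≤ κ ∧ p ∈ @closure X t B}

/-- The Lindelöf number: the least infinite cardinal `κ` such that every open cover has
a subcover of cardinality at most `κ`. -/
noncomputable def lindelofNumberOf {X : Type u} (t : TopologicalSpace X) : Cardinal.{u} :=
  sInf {κ : Cardinal.{u} | ℵ₀ ≤ κ ∧ ∀ 𝒰 : Set (Set X), (∀ U ∈ 𝒰, @IsOpen X t U) →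
    ⋃₀ 𝒰 = Set.univ → ∃ 𝒱 ⊆ 𝒰, #↥𝒱 ≤ κ ∧ ⋃₀ 𝒱 = Set.univ}

/-- `F(X)`: the supremum of the cardinalities (lengths) of free sequences, at least ℵ₀. -/
noncomputable def freeNumberOf {X : Type u} (t : TopologicalSpace X) : Cardinal.{u} :=
  ℵ₀ ⊔ sSup {c : Cardinal.{u} |
    ∃ x : {α : Ordinal.{u} // α < c.ord} → X, IsFreeSeqOn t c.ord x}

/-- The G_δ-modification: the topology generated by the G_δ-subsets. -/
def gDelta {X : Type u} (t : TopologicalSpace X) : TopologicalSpace X :=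
  TopologicalSpace.generateFrom {s : Set X | @IsGδ X t s}

/-- `Cl_κ`-Lindelöf: every open `Cl_κ`-cover of any subset `W` contains a countable
subfamily covering `W`. -/
def ClLindelofOf {X : Type u} (t : TopologicalSpace X) (κ : Cardinal.{u}) : Prop :=
  ∀ (W : Set X) (𝒰 : Set (Set X)), (∀ U ∈ 𝒰, @IsOpen X t U) →
    (∀ C ⊆ W, #↥C ≤ κ → ∃ U ∈ 𝒰, @closure X t C ⊆ U) →
    ∃ 𝒱 ⊆ 𝒰, 𝒱.Countable ∧ W ⊆ ⋃₀ 𝒱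

open Filter

section GDelta

variable {X : Type u} [t : TopologicalSpace X]

theorem gDelta_le : gDelta t ≤ t := fun _ hs => .basic _ hs.isGδ

theorem isTopologicalBasis_gDelta :
    @TopologicalSpace.IsTopologicalBasis X (gDelta t) {s | IsGδ s} :=
  @TopologicalSpace.isTopologicalBasis_of_subbasis_of_finiteInter X (gDelta t) _ rfl
    ⟨.univ, fun _ hs _ ht => hs.inter ht⟩

theorem mem_closure_gDelta_iff {s : Set X} {a : X} :
    a ∈ closure[gDelta t] s ↔ ∀ G, IsGδ G → a ∈ G → (G ∩ s).Nonempty :=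
  @TopologicalSpace.IsTopologicalBasis.mem_closure_iff X (gDelta t) _ isTopologicalBasis_gDelta _ _

end GDelta

theorem lt_tightnessOf {X : Type u} (t : TopologicalSpace X) {κ : Cardinal.{u}} {A : Set X} {a : X}
    (ha : a ∈ closure[t] A) (h : ∀ B ⊆ A, #B ≤ κ → a ∉ closure[t] B) : κ < tightnessOf t := by
  have hne : {κ : Cardinal.{u} | ℵ₀ ≤ κ ∧ ∀ (A : Set X) (p : X), p ∈ closure A →
      ∃ B ⊆ A, #↥B ≤ κ ∧ p ∈ closure B}.Nonempty :=
    ⟨ℵ₀ ⊔ #X, le_sup_left, fun A _ hp => ⟨A, subset_rfl, (mk_set_le A).trans le_sup_right, hp⟩⟩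
  obtain ⟨-, htight⟩ := csInf_mem hne
  obtain ⟨B, hBA, hB, haB⟩ := htight A a ha
  exact lt_of_not_ge fun hle => h B hBA (hB.trans hle) haB

theorem Set.Finite.exists_finset_separating {α : Type*} {T : Set (Set α)} (hT : T.Finite) :
    ∃ S : Finset α, ∀ X ∈ T, ∀ Y ∈ T, X ≠ Y → ∃ n ∈ S, ¬(n ∈ X ↔ n ∈ Y) := by
  have : ∀ p : {p : T × T // (p.1 : Set α) ≠ p.2}, ∃ n, ¬(n ∈ p.1.1.1 ↔ n ∈ p.1.2.1) :=
    fun p => not_forall.mp (mt Set.ext p.2)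
  choose f hf using this
  have := hT.to_subtype
  exact ⟨(Set.finite_range f).toFinset, fun X hX Y hY hXY =>
    ⟨f ⟨(⟨X, hX⟩, ⟨Y, hY⟩), hXY⟩, by simp, hf ⟨(⟨X, hX⟩, ⟨Y, hY⟩), hXY⟩⟩⟩

abbrev IndepIndex : Type := Finset ℕ × Finset (Finset ℕ)

open Classical in
def indepSet (X : Set ℕ) : Set IndepIndex := {d | d.1.filter (· ∈ X) ∈ d.2}

theorem infinite_iInter_indepSet (g : Set (Set ℕ)) {T : Set (Set ℕ)} (hT : T.Finite) :
    (⋂ X ∈ T, {d | d ∈ indepSet X ↔ X ∈ g}).Infinite := by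
  classical
  obtain ⟨S, hS⟩ := hT.exists_finset_separating
  intro hfin
  obtain ⟨n, hn⟩ := Infinite.exists_notMem_finset (hfin.toFinset.biUnion Prod.fst)
  set D := insert n S
  have htrace : ∀ X ∈ T, ∀ Y ∈ T, D.filter (· ∈ X) = D.filter (· ∈ Y) → X = Y := by
    intro X hX Y hY h
    by_contra hXY
    obtain ⟨m, hmS, hm⟩ := hS X hX Y hY hXY
    exact hm (by simpa [D, hmS] using congrArg (m ∈ ·) h)
  let d : IndepIndex :=
    (D, (hT.toFinset.filter (· ∈ g)).image fun Y => D.filter (· ∈ Y))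
  have hd : d ∈ ⋂ X ∈ T, {d | d ∈ indepSet X ↔ X ∈ g} := by
    refine mem_iInter₂.mpr fun X hX => ?_
    simp only [indepSet, mem_ofPred_eq, Finset.mem_image, Finset.mem_filter, Finite.mem_toFinset, d]
    constructor
    · rintro ⟨Y, ⟨hY, hYg⟩, h⟩
      rwa [← htrace Y hY X hX h]
    · intro hXg
      exact ⟨X, ⟨hX, hXg⟩, rfl⟩
  exact hn (Finset.mem_biUnion.mpr ⟨d, hfin.mem_toFinset.mpr hd, Finset.mem_insert_self n S⟩)

def indepFilter (g : Set (Set ℕ)) : Filter IndepIndex :=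
  cofinite ⊓ ⨅ X, 𝓟 {d | d ∈ indepSet X ↔ X ∈ g}

instance indepFilter_neBot (g : Set (Set ℕ)) : (indepFilter g).NeBot := by
  refine inf_neBot_iff.mpr fun s hs s' hs' => ?_
  obtain ⟨T, hT, hTs'⟩ := (hasBasis_iInf_principal_finite _).mem_iff.mp hs'
  exact ((infinite_iInter_indepSet g hT).sdiff hs).nonempty.mono
    fun d hd => ⟨not_not.mp hd.2, hTs' hd.1⟩

noncomputable def indepUltrafilter (g : Set (Set ℕ)) : Ultrafilter IndepIndex :=
  .of (indepFilter g)

theorem indepUltrafilter_le_cofinite (g : Set (Set ℕ)) :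
    (indepUltrafilter g : Filter IndepIndex) ≤ cofinite :=
  (Ultrafilter.of_le _).trans inf_le_left

theorem indepUltrafilter_injective : Function.Injective indepUltrafilter := by
  intro g g' h
  by_contra hne
  obtain ⟨X, hX⟩ : ∃ X, ¬(X ∈ g ↔ X ∈ g') := not_forall.mp (mt Set.ext hne)
  have mem : ∀ g, {d | d ∈ indepSet X ↔ X ∈ g} ∈ indepUltrafilter g := fun g =>
    Ultrafilter.of_le _ (mem_inf_of_right (mem_iInf_of_mem X (mem_principal_self _)))
  obtain ⟨d, hd, hd'⟩ := (indepUltrafilter g).nonempty_of_mem (inter_mem (mem g) (h ▸ mem g'))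
  exact hX (hd.symm.trans hd')

theorem two_pow_continuum_le_mk_freeUltrafilter :
    2 ^ 𝔠 ≤ #{q : Ultrafilter IndepIndex // (q : Filter IndepIndex) ≤ cofinite} :=
  calc 2 ^ 𝔠 = #(Set (Set ℕ)) := by rw [mk_set, mk_set, mk_nat, two_power_aleph0]
    _ ≤ _ := mk_le_of_injective (f := fun g => ⟨indepUltrafilter g, indepUltrafilter_le_cofinite g⟩)
      fun _ _ h => indepUltrafilter_injective (congrArg Subtype.val h)

theorem Ultrafilter.map_injective {α β : Type*} {f : α → β} (hf : Function.Injective f) :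
    Function.Injective (Ultrafilter.map f) := fun u v h => by
  ext s
  rw [← preimage_image_eq s hf, ← Ultrafilter.mem_map, ← Ultrafilter.mem_map, h]

theorem two_pow_continuum_le_mk_freeUltrafilter_mem {α : Type} [Countable α] {A : Set α}
    (hA : A.Infinite) : 2 ^ 𝔠 ≤ #{q : Ultrafilter α // (q : Filter α) ≤ cofinite ∧ A ∈ q} := by
  obtain ⟨i, hi⟩ := Countable.exists_injective_nat IndepIndex
  let e := Subtype.val ∘ hA.natEmbedding ∘ i
  have he : Function.Injective e :=
    Subtype.val_injective.comp (hA.natEmbedding.injective.comp hi)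
  refine two_pow_continuum_le_mk_freeUltrafilter.trans
    (mk_le_of_injective (f := fun q => ⟨q.1.map e, (map_mono q.2).trans he.tendsto_cofinite, ?_⟩)
      fun _ _ h => Subtype.ext (Ultrafilter.map_injective he (congrArg Subtype.val h)))
  exact Ultrafilter.mem_map.mpr (univ_mem' fun d => (Set.Infinite.natEmbedding A hA (i d)).2)

def branch (x : ℕ → Bool) : Set (List Bool) := range fun n => (List.range n).map x

theorem branch_infinite (x : ℕ → Bool) : (branch x).Infinite :=
  infinite_range_of_injective fun n m h => by simpa using congrArg List.length h

theorem mem_branch_getD (l : List Bool) : l ∈ branch fun i => l.getD i false :=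
  ⟨l.length, List.ext_getElem (by simp) fun i _ h => by simp [h]⟩

theorem finite_branch_inter_branch {x y : ℕ → Bool} (hxy : x ≠ y) :
    (branch x ∩ branch y).Finite := by
  obtain ⟨k, hk⟩ := Function.ne_iff.mp hxy
  refine ((Set.finite_le_nat k).image fun n => (List.range n).map x).subset ?_
  rintro _ ⟨⟨n, rfl⟩, m, hm⟩
  obtain rfl : m = n := by simpa using congrArg List.length hm
  refine ⟨m, show m ≤ k from not_lt.mp fun hkm => hk ?_, rfl⟩
  simpa [hkm] using (congrArg (·[k]?) hm).symm

theorem Ultrafilter.notMem_of_le_cofinite {α : Type*} {q : Ultrafilter α}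
    (hq : (q : Filter α) ≤ cofinite) {s : Set α} (hs : s.Finite) : s ∉ q :=
  fun h => q.compl_notMem_iff.mpr h (hq hs.compl_mem_cofinite)

abbrev BranchUltrafilter : Type :=
  {q : Ultrafilter (List Bool) // (q : Filter (List Bool)) ≤ cofinite ∧ ∃ x, branch x ∈ q}

inductive CantorTreeSpace
  | node (l : List Bool)
  | ultra (q : BranchUltrafilter)
  | infty

namespace CantorTreeSpace

def cone (A : Set (List Bool)) : Set CantorTreeSpace := node '' A ∪ ultra '' {q | A ∈ q.1}

@[simp] theorem node_mem_cone {A : Set (List Bool)} {l : List Bool} :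
    node l ∈ cone A ↔ l ∈ A := by
  simp [cone]

@[simp] theorem ultra_mem_cone {A : Set (List Bool)} {q : BranchUltrafilter} :
    ultra q ∈ cone A ↔ A ∈ q.1 := by
  simp [cone]

@[simp] theorem infty_notMem_cone (A : Set (List Bool)) : infty ∉ cone A := by
  simp [cone]

@[simp] theorem preimage_node_cone (A : Set (List Bool)) : node ⁻¹' cone A = A := by
  ext; simp

theorem cone_mono {A B : Set (List Bool)} (h : A ⊆ B) : cone A ⊆ cone B :=
  union_subset_union (image_mono h) (image_mono fun _ hq => mem_of_superset hq h)

def IsSmallMod (F : Set (ℕ → Bool)) (C : Set CantorTreeSpace) : Prop :=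
  #↥(C \ ⋃ x ∈ F, cone (branch x)) ≤ 𝔠

section IsSmallMod

variable {F F' : Set (ℕ → Bool)} {C C' : Set CantorTreeSpace}

theorem isSmallMod_of_subset (h : C ⊆ ⋃ x ∈ F, cone (branch x)) : IsSmallMod F C := by
  simp [IsSmallMod, sdiff_eq_empty.mpr h]

theorem isSmallMod_of_mk_le (h : #C ≤ 𝔠) : IsSmallMod F C :=
  (mk_le_mk_of_subset sdiff_subset).trans h

theorem IsSmallMod.mono (hF : F ⊆ F') (hC : C' ⊆ C) (h : IsSmallMod F C) : IsSmallMod F' C' :=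
  (mk_le_mk_of_subset (sdiff_subset_sdiff hC (biUnion_subset_biUnion_left hF))).trans h

theorem IsSmallMod.union (h : IsSmallMod F C) (h' : IsSmallMod F' C') :
    IsSmallMod (F ∪ F') (C ∪ C') := by
  have hsub : (C ∪ C') \ ⋃ x ∈ F ∪ F', cone (branch x) ⊆
      (C \ ⋃ x ∈ F, cone (branch x)) ∪ (C' \ ⋃ x ∈ F', cone (branch x)) := by
    rw [union_sdiff_distrib]
    exact union_subset_union
      (sdiff_subset_sdiff_right (biUnion_subset_biUnion_left subset_union_left))
      (sdiff_subset_sdiff_right (biUnion_subset_biUnion_left subset_union_right))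
  calc _ ≤ _ := mk_le_mk_of_subset hsub
    _ ≤ _ := mk_union_le _ _
    _ ≤ 𝔠 + 𝔠 := add_le_add h h'
    _ = 𝔠 := continuum_add_self

theorem IsSmallMod.iUnion {ι : Type} [Countable ι] {F : ι → Set (ℕ → Bool)}
    {C : ι → Set CantorTreeSpace} (h : ∀ i, IsSmallMod (F i) (C i)) :
    IsSmallMod (⋃ i, F i) (⋃ i, C i) := by
  have hsub : (⋃ i, C i) \ ⋃ x ∈ ⋃ i, F i, cone (branch x) ⊆
      ⋃ i, C i \ ⋃ x ∈ F i, cone (branch x) := by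
    rw [iUnion_sdiff]
    exact iUnion_mono fun i =>
      sdiff_subset_sdiff_right (biUnion_subset_biUnion_left (subset_iUnion F i))
  calc _ ≤ _ := mk_le_mk_of_subset hsub
    _ ≤ _ := mk_iUnion_le _
    _ ≤ ℵ₀ * 𝔠 := mul_le_mul' mk_le_aleph0 (ciSup_le' h)
    _ = 𝔠 := aleph0_mul_continuum

end IsSmallMod

instance : TopologicalSpace CantorTreeSpace where
  IsOpen U := (∀ q, ultra q ∈ U → node ⁻¹' U ∈ q.1) ∧
    (infty ∈ U → ∃ F, F.Finite ∧ IsSmallMod F Uᶜ)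
  isOpen_univ := ⟨fun _ _ => univ_mem, fun _ => ⟨∅, finite_empty, isSmallMod_of_subset (by simp)⟩⟩
  isOpen_inter U V hU hV := by
    refine ⟨fun q hq => inter_mem (hU.1 q hq.1) (hV.1 q hq.2), fun h => ?_⟩
    obtain ⟨F, hF, hUF⟩ := hU.2 h.1
    obtain ⟨F', hF', hVF'⟩ := hV.2 h.2
    exact ⟨F ∪ F', hF.union hF', compl_inter U V ▸ hUF.union hVF'⟩
  isOpen_sUnion 𝒰 h𝒰 := by
    refine ⟨fun q ⟨U, hU, hq⟩ => mem_of_superset ((h𝒰 U hU).1 q hq)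
      (preimage_mono (subset_sUnion_of_mem hU)), fun ⟨U, hU, h⟩ => ?_⟩
    obtain ⟨F, hF, hUF⟩ := (h𝒰 U hU).2 h
    exact ⟨F, hF, hUF.mono subset_rfl (compl_subset_compl.mpr (subset_sUnion_of_mem hU))⟩

theorem isOpen_cone (A : Set (List Bool)) : IsOpen (cone A) :=
  ⟨fun q hq => by simpa using hq, fun h => absurd h (infty_notMem_cone A)⟩

theorem isClosed_cone {A : Set (List Bool)} {x : ℕ → Bool} (hA : A ⊆ branch x) :
    IsClosed (cone A) := by
  refine ⟨fun q hq => ?_, fun _ => ⟨{x}, finite_singleton x, isSmallMod_of_subset ?_⟩⟩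
  · rw [preimage_compl, preimage_node_cone]
    exact q.1.compl_mem_iff_notMem.mpr (by simpa using hq)
  · simpa using cone_mono hA

theorem isClosed_of_subset_range_ultra {B : Set CantorTreeSpace} (hB : B ⊆ range ultra)
    (hBc : #B ≤ 𝔠) : IsClosed B := by
  refine ⟨fun q _ => univ_mem' fun l hl => ?_, fun _ => ⟨∅, finite_empty, isSmallMod_of_mk_le ?_⟩⟩
  · obtain ⟨q, ⟨⟩⟩ := hB hl
  · rwa [compl_compl]

theorem exists_isSmallMod_compl_of_isGδ {G : Set CantorTreeSpace} (hG : IsGδ G)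
    (hinf : infty ∈ G) : ∃ F, F.Countable ∧ IsSmallMod F Gᶜ := by
  obtain ⟨T, hTo, hTc, rfl⟩ := hG
  have := hTc.to_subtype
  choose F hF hFs using fun U : T => (hTo U U.2).2 (hinf U U.2)
  refine ⟨⋃ U, F U, countable_iUnion fun U => (hF U).countable,
    (IsSmallMod.iUnion hFs).mono subset_rfl fun z hz => ?_⟩
  simpa using hz

theorem exists_ultra_mem_of_isSmallMod_compl {F : Set (ℕ → Bool)} (hF : F.Countable)
    {U : Set CantorTreeSpace} (hU : IsSmallMod F Uᶜ) : ∃ q, ultra q ∈ U := by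
  obtain ⟨y, hy⟩ : ∃ y, y ∉ F := by
    by_contra! hall
    refine aleph0_lt_continuum.not_ge ?_
    calc 𝔠 = #(ℕ → Bool) := by simp
      _ ≤ #F := mk_le_of_injective (f := fun y => ⟨y, hall y⟩) fun _ _ h => congrArg Subtype.val h
      _ ≤ ℵ₀ := le_aleph0_iff_set_countable.mpr hF
  by_contra! hUc
  let f : {q : Ultrafilter (List Bool) // (q : Filter (List Bool)) ≤ cofinite ∧ branch y ∈ q} →
      CantorTreeSpace := fun q => ultra ⟨q.1, q.2.1, y, q.2.2⟩
  have hf : Function.Injective f := fun q q' h =>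
    Subtype.ext (Subtype.mk.inj (ultra.inj h))
  have hrange : range f ⊆ Uᶜ \ ⋃ x ∈ F, cone (branch x) := by
    rintro _ ⟨q, rfl⟩
    refine ⟨hUc _, ?_⟩
    simp only [f, mem_iUnion₂, ultra_mem_cone, not_exists]
    intro x hx hxq
    exact Ultrafilter.notMem_of_le_cofinite q.2.1
      (finite_branch_inter_branch (ne_of_mem_of_not_mem hx hy)) (inter_mem hxq q.2.2)
  refine (cantor 𝔠).not_ge ?_
  calc 2 ^ 𝔠 ≤ _ := two_pow_continuum_le_mk_freeUltrafilter_mem (branch_infinite y)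
    _ = #(range f) := (mk_range_eq f hf).symm
    _ ≤ 𝔠 := (mk_le_mk_of_subset hrange).trans hU

theorem exists_cone_separating {a b : CantorTreeSpace} (ha : a ≠ infty) (hab : a ≠ b) :
    ∃ x, ∃ A ⊆ branch x, a ∈ cone A ∧ b ∉ cone A := by
  cases a with
  | infty => exact absurd rfl ha
  | node l =>
    refine ⟨fun i => l.getD i false, {l}, singleton_subset_iff.mpr (mem_branch_getD l), by simp, ?_⟩
    cases b with
    | node m => simpa [eq_comm] using hab
    | ultra q => simpa using Ultrafilter.notMem_of_le_cofinite q.2.1 (finite_singleton l)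
    | infty => simp
  | ultra p =>
    obtain ⟨x, hx⟩ := p.2.2
    cases b with
    | node l =>
      refine ⟨x, branch x ∩ {l}ᶜ, inter_subset_left, ultra_mem_cone.mpr ?_, by simp⟩
      exact inter_mem hx (p.2.1 (finite_singleton l).compl_mem_cofinite)
    | ultra q =>
      obtain ⟨B, hBp, hBq⟩ : ∃ B ∈ p.1, B ∉ q.1 := by
        by_contra! h
        exact hab (congrArg ultra (Subtype.ext (Ultrafilter.coe_le_coe.mp h).symm))
      exact ⟨x, branch x ∩ B, inter_subset_left, ultra_mem_cone.mpr (inter_mem hx hBp),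
        mt ultra_mem_cone.mp fun h => hBq (mem_of_superset h inter_subset_right)⟩
    | infty => exact ⟨x, branch x, subset_rfl, by simpa using hx, by simp⟩

instance : TotallySeparatedSpace CantorTreeSpace := by
  refine totallySeparatedSpace_iff_exists_isClopen.mpr fun a b hab => ?_
  wlog ha : a ≠ infty
  · obtain ⟨U, hU, hbU, haU⟩ := this b a hab.symm (not_not.mp ha ▸ hab.symm)
    exact ⟨Uᶜ, hU.compl, haU, by simpa using hbU⟩
  obtain ⟨x, A, hA, haA, hbA⟩ := exists_cone_separating ha hab
  exact ⟨cone A, ⟨isClosed_cone hA, isOpen_cone A⟩, haA, hbA⟩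

instance : TopologicalSpace.SeparableSpace CantorTreeSpace := by
  refine ⟨range node, countable_range node, dense_iff_inter_open.mpr fun U hU ⟨a, ha⟩ => ?_⟩
  have hultra : ∀ q, ultra q ∈ U → (U ∩ range node).Nonempty := fun q hq =>
    let ⟨l, hl⟩ := q.1.nonempty_of_mem (hU.1 q hq)
    ⟨node l, hl, l, rfl⟩
  cases a with
  | node l => exact ⟨node l, ha, l, rfl⟩
  | ultra q => exact hultra q ha
  | infty =>
    obtain ⟨F, hF, hUF⟩ := hU.2 ha
    obtain ⟨q, hq⟩ := exists_ultra_mem_of_isSmallMod_compl hF.countable hUF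
    exact hultra q hq

theorem infty_mem_closure_range_ultra : infty ∈ closure[gDelta inferInstance] (range ultra) :=
  mem_closure_gDelta_iff.mpr fun _ hG hinf =>
    let ⟨_, hF, hGF⟩ := exists_isSmallMod_compl_of_isGδ hG hinf
    let ⟨q, hq⟩ := exists_ultra_mem_of_isSmallMod_compl hF hGF
    ⟨ultra q, hq, q, rfl⟩

theorem infty_notMem_closure {B : Set CantorTreeSpace} (hB : B ⊆ range ultra) (hBc : #B ≤ 𝔠) :
    infty ∉ closure[gDelta inferInstance] B := by
  rw [@IsClosed.closure_eq _ (gDelta _) _ ((isClosed_of_subset_range_ultra hB hBc).mono gDelta_le)]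
  intro h
  obtain ⟨q, ⟨⟩⟩ := hB h

end CantorTreeSpace

/-- there is a separable Hausdorff space `X` with
`t(X_δ) > 2^{ℵ₀}` (witnessed by the Katětov extension of `ω` plus a point `∞`). -/
theorem statement15 :
    ∃ (X : Type) (tX : TopologicalSpace X),
      @TopologicalSpace.SeparableSpace X tX ∧ @T2Space X tX ∧
      (2 : Cardinal.{0}) ^ ℵ₀ < tightnessOf (gDelta tX) := by
  refine ⟨CantorTreeSpace, inferInstance, inferInstance, inferInstance, ?_⟩
  rw [two_power_aleph0]
  exact lt_tightnessOf _ CantorTreeSpace.infty_mem_closure_range_ultra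
    fun _ hB hBc => CantorTreeSpace.infty_notMem_closure hB hBc
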